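/- arXiv:2301.09877 — 3 statements merged into one kernel-verified Lean document; each statement's English description precedes it below -/
import Mathlib

section
/- If U is a unitary matrix and X is a Hermitian matrix, then U commutes with X if and only if U commutes with exp(X). -/
open Matrix Kronecker ComplexOrder
open scoped Classical

lemma diag_comm_iff {n : ℕ} (M : Matrix (Fin n) (Fin n) ℂ) (d : Fin n → ℂ) :
    M * Matrix.diagonal d = Matrix.diagonal d * M ↔ ∀ i j, d i ≠ d j → M i j = 0 := by
  rw [← Matrix.ext_iff]
  simp only [Matrix.mul_diagonal, Matrix.diagonal_mul]
  constructor
  · intro h i j hd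
    have := h i j
    have h2 : M i j * (d j - d i) = 0 := by ring_nf; linear_combination this
    rcases mul_eq_zero.mp h2 with h3 | h3
    · exact h3
    · exact (hd (by linear_combination -h3)).elim
  · intro h i j
    by_cases hd : d i = d j
    · rw [hd, mul_comm]
    · rw [h i j hd, zero_mul, mul_zero]

lemma conj_cancel {n : ℕ} (V C D : Matrix (Fin n) (Fin n) ℂ)
    (h2 : V * star V = 1) (h : star V * C * V = star V * D * V) : C = D := by
  have := congrArg (fun M => V * M * star V) h
  simpa only [mul_assoc, ← mul_assoc V (star V), h2, one_mul, mul_one] using this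

lemma myconj_mul {n : ℕ} (V C D : Matrix (Fin n) (Fin n) ℂ) (h2 : V * star V = 1) :
    (star V * C * V) * (star V * D * V) = star V * (C * D) * V := by
  simp only [mul_assoc]
  rw [← mul_assoc V (star V), h2, one_mul]

lemma conj_comm_iff {n : ℕ} (V A B : Matrix (Fin n) (Fin n) ℂ) (h2 : V * star V = 1) :
    A * B = B * A ↔
      (star V * A * V) * (star V * B * V) = (star V * B * V) * (star V * A * V) := by
  rw [myconj_mul _ _ _ h2, myconj_mul _ _ _ h2]
  constructor
  · intro h; rw [h]
  · intro h; exact conj_cancel V _ _ h2 h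

/-- A unitary commutes with a Hermitian matrix iff it commutes with its exponential. -/
theorem unitary_commutes_iff_commutes_exp {n : ℕ} (U X : Matrix (Fin n) (Fin n) ℂ)
    (hU : U ∈ Matrix.unitaryGroup (Fin n) ℂ) (hX : X.IsHermitian) :
    U * X = X * U ↔ U * NormedSpace.exp X = NormedSpace.exp X * U := by
  set V : Matrix (Fin n) (Fin n) ℂ := (hX.eigenvectorUnitary : Matrix (Fin n) (Fin n) ℂ) with hVdef
  have hVmem := hX.eigenvectorUnitary.2
  have h1 : star V * V = 1 := hVmem.1
  have h2 : V * star V = 1 := hVmem.2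
  set d : Fin n → ℂ := RCLike.ofReal ∘ hX.eigenvalues with hd
  set e : Fin n → ℂ := fun i => Complex.exp (d i) with he
  have hspec : X = V * Matrix.diagonal d * star V := hX.spectral_theorem
  have hD : star V * X * V = Matrix.diagonal d := by
    rw [hspec]
    simp only [mul_assoc]
    rw [h1, mul_one, ← mul_assoc (star V) V, h1, one_mul]
  have hVinv : V⁻¹ = star V := Matrix.inv_eq_left_inv h1
  have hVunit : IsUnit V := ⟨⟨V, star V, h2, h1⟩, rfl⟩
  have hexpX : NormedSpace.exp X = V * Matrix.diagonal e * star V := by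
    have hde : NormedSpace.exp d = e := by
      funext i
      rw [he, Pi.exp_def, ← Complex.exp_eq_exp_ℂ]
    rw [hspec, ← hVinv, Matrix.exp_conj V _ hVunit, Matrix.exp_diagonal, hVinv, hde]
  have hE : star V * NormedSpace.exp X * V = Matrix.diagonal e := by
    rw [hexpX]
    simp only [mul_assoc]
    rw [h1, mul_one, ← mul_assoc (star V) V, h1, one_mul]
  rw [conj_comm_iff V U X h2, conj_comm_iff V U _ h2, hD, hE,
    diag_comm_iff, diag_comm_iff]
  have key : ∀ i j, d i = d j ↔ e i = e j := by
    intro i j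
    constructor
    · intro h; rw [he]; simp [h]
    · intro h
      rw [he] at h
      rw [hd] at h ⊢
      simp only [Function.comp_apply] at h ⊢
      have h' : Real.exp (hX.eigenvalues i) = Real.exp (hX.eigenvalues j) := by
        have := h
        rw [show (RCLike.ofReal (hX.eigenvalues i) : ℂ) = ((hX.eigenvalues i : ℝ) : ℂ) from rfl,
          show (RCLike.ofReal (hX.eigenvalues j) : ℂ) = ((hX.eigenvalues j : ℝ) : ℂ) from rfl,
          ← Complex.ofReal_exp, ← Complex.ofReal_exp] at this
        exact_mod_cast this
      have h2' := Real.exp_injective h'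
      rw [h2']
  constructor
  · intro h i j hne
    exact h i j (fun hdd => hne ((key i j).mp hdd))
  · intro h i j hne
    exact h i j (fun hee => hne ((key i j).mpr hee))
end

section
/- The Fuchs–van de Graaf inequality: for any two density matrices ρ and σ, the trace distance satisfies D(ρ,σ) ≤ √(1 − F(ρ,σ)²), where F is the fidelity. -/
open Matrix Kronecker ComplexOrder
open scoped Classical

noncomputable def psdSqrt {n : Type*} [Fintype n] [DecidableEq n]
    (A : Matrix n n ℂ) : Matrix n n ℂ :=
  if h : A.PosSemidef then
    h.1.eigenvectorUnitary.1 * diagonal ((↑) ∘ (Real.sqrt ∘ h.1.eigenvalues)) *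
      (star h.1.eigenvectorUnitary : Matrix n n ℂ)
  else 0

noncomputable def fidelity {n : Type*} [Fintype n] [DecidableEq n]
    (ρ σ : Matrix n n ℂ) : ℝ :=
  (Matrix.trace (psdSqrt (psdSqrt ρ * σ * psdSqrt ρ))).re

noncomputable def traceDist {n : Type*} [Fintype n] [DecidableEq n]
    (ρ σ : Matrix n n ℂ) : ℝ :=
  (Matrix.trace (psdSqrt ((ρ - σ)ᴴ * (ρ - σ)))).re / 2

noncomputable def Matrix.PosSemidef.sqrt {n : Type*} [Fintype n] [DecidableEq n]
    {A : Matrix n n ℂ} (h : A.PosSemidef) : Matrix n n ℂ :=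
  h.1.eigenvectorUnitary.1 * diagonal ((↑) ∘ (Real.sqrt ∘ h.1.eigenvalues)) *
    (star h.1.eigenvectorUnitary : Matrix n n ℂ)

lemma Matrix.PosSemidef.sqrt_eq_cfc {n : Type*} [Fintype n] [DecidableEq n]
    {A : Matrix n n ℂ} (h : A.PosSemidef) : h.sqrt = cfc Real.sqrt A := by
  rw [h.1.cfc_eq, IsHermitian.cfc, Unitary.conjStarAlgAut_apply]
  rfl

lemma Matrix.PosSemidef.posSemidef_sqrt {n : Type*} [Fintype n] [DecidableEq n]
    {A : Matrix n n ℂ} (h : A.PosSemidef) : h.sqrt.PosSemidef := by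
  unfold Matrix.PosSemidef.sqrt
  refine (Matrix.posSemidef_diagonal_iff.mpr fun i => ?_).mul_mul_conjTranspose_same _
  simp only [Function.comp_apply, Complex.zero_le_real]
  exact Real.sqrt_nonneg _

lemma Matrix.PosSemidef.spec_nonneg {n : Type*} [Fintype n] [DecidableEq n]
    {A : Matrix n n ℂ} (h : A.PosSemidef) : ∀ x ∈ spectrum ℝ A, 0 ≤ x := by
  intro x hx
  rw [h.1.spectrum_real_eq_range_eigenvalues] at hx
  obtain ⟨i, rfl⟩ := hx
  exact h.eigenvalues_nonneg i

lemma Matrix.PosSemidef.sqrt_mul_self {n : Type*} [Fintype n] [DecidableEq n]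
    {A : Matrix n n ℂ} (h : A.PosSemidef) : h.sqrt * h.sqrt = A := by
  have hA : IsSelfAdjoint A := h.1
  rw [h.sqrt_eq_cfc, ← cfc_mul Real.sqrt Real.sqrt A]
  conv_rhs => rw [← cfc_id ℝ A hA]
  refine cfc_congr fun x hx => ?_
  exact Real.mul_self_sqrt (h.spec_nonneg x hx)

lemma Matrix.PosSemidef.eq_sqrt_of_sq_eq {n : Type*} [Fintype n] [DecidableEq n]
    {B A : Matrix n n ℂ} (hB : B.PosSemidef) (hA : A.PosSemidef) (hBA : B ^ 2 = A) :
    B = hA.sqrt := by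
  have hB' : IsSelfAdjoint B := hB.1
  rw [hA.sqrt_eq_cfc, ← hBA, ← cfc_pow_id (R := ℝ) B 2 hB', ← cfc_comp Real.sqrt (fun x : ℝ => x ^ 2) B hB']
  conv_lhs => rw [← cfc_id ℝ B hB']
  refine cfc_congr fun x hx => ?_
  simp [Real.sqrt_sq (hB.spec_nonneg x hx)]

section FvdGAux
variable {m : Type*} [Fintype m] [DecidableEq m]

lemma psdSqrt_of (A : Matrix m m ℂ) (h : A.PosSemidef) : psdSqrt A = h.sqrt := dif_pos h

lemma psdSqrt_eq_of {A B : Matrix m m ℂ} (hB : B.PosSemidef) (hBA : B * B = A) :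
    psdSqrt A = B := by
  have hA : A.PosSemidef := by
    rw [← hBA]; nth_rewrite 1 [← hB.1]
    exact Matrix.posSemidef_conjTranspose_mul_self B
  rw [psdSqrt_of A hA]
  exact (hB.eq_sqrt_of_sq_eq hA (by rw [pow_two, hBA])).symm

/-- conjugation of a real diagonal by V -/
noncomputable def cg (V : Matrix m m ℂ) (f : m → ℝ) : Matrix m m ℂ :=
  V * Matrix.diagonal (fun i => (f i : ℂ)) * Vᴴ

variable {V : Matrix m m ℂ} (hV : Vᴴ * V = 1)

include hV in
lemma cg_mul (f g : m → ℝ) : cg V f * cg V g = cg V (fun i => f i * g i) := by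
  unfold cg
  simp only [Matrix.mul_assoc]
  rw [← Matrix.mul_assoc Vᴴ V, hV, Matrix.one_mul, ← Matrix.mul_assoc _ _ Vᴴ,
    Matrix.diagonal_mul_diagonal]
  push_cast
  rfl

include hV in
lemma trace_cg (f : m → ℝ) : (cg V f).trace = ∑ i, (f i : ℂ) := by
  unfold cg
  rw [Matrix.trace_mul_cycle, hV, Matrix.one_mul, Matrix.trace_diagonal]

lemma cg_conjTranspose (f : m → ℝ) : (cg V f)ᴴ = cg V f := by
  unfold cg
  rw [Matrix.conjTranspose_mul, Matrix.conjTranspose_mul, Matrix.conjTranspose_conjTranspose,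
    Matrix.diagonal_conjTranspose, Matrix.mul_assoc]
  congr 2
  simp [Pi.star_def]

lemma cg_psd (f : m → ℝ) (hf : ∀ i, 0 ≤ f i) : (cg V f).PosSemidef := by
  unfold cg
  refine (Matrix.posSemidef_diagonal_iff.mpr fun i => ?_).mul_mul_conjTranspose_same V
  exact_mod_cast hf i

lemma cg_one (hV' : V * Vᴴ = 1) : cg V (fun _ => 1) = 1 := by
  unfold cg
  simp [hV']

lemma cg_sub (f g : m → ℝ) : cg V f - cg V g = cg V (fun i => f i - g i) := by
  unfold cg
  rw [← Matrix.sub_mul, ← Matrix.mul_sub, Matrix.diagonal_sub]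
  push_cast
  rfl

lemma trace_ctm_nonneg (B : Matrix m m ℂ) : 0 ≤ (Bᴴ * B).trace := by
  rw [Matrix.trace]
  refine Finset.sum_nonneg fun i _ => ?_
  rw [Matrix.diag, Matrix.mul_apply]
  exact Finset.sum_nonneg fun j _ => by
    simpa [Matrix.conjTranspose_apply] using star_mul_self_nonneg (B j i)

lemma trace_psd_nonneg {X : Matrix m m ℂ} (hX : X.PosSemidef) : 0 ≤ X.trace := by
  obtain ⟨B, rfl⟩ : ∃ B : Matrix m m ℂ, X = Bᴴ * B :=
    ⟨hX.sqrt, by rw [hX.posSemidef_sqrt.1, hX.sqrt_mul_self]⟩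
  exact trace_ctm_nonneg B

lemma re_nn {z : ℂ} (h : 0 ≤ z) : 0 ≤ z.re := by
  simpa using (Complex.le_def.mp h).1

lemma trace_psd_mul_nonneg {X Y : Matrix m m ℂ} (hX : X.PosSemidef) (hY : Y.PosSemidef) :
    0 ≤ (X * Y).trace := by
  obtain ⟨B, rfl⟩ : ∃ B : Matrix m m ℂ, X = Bᴴ * B :=
    ⟨hX.sqrt, by rw [hX.posSemidef_sqrt.1, hX.sqrt_mul_self]⟩
  rw [Matrix.mul_assoc, Matrix.trace_mul_comm]
  exact trace_psd_nonneg (hY.mul_mul_conjTranspose_same B)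

lemma herm_idem_psd {J : Matrix m m ℂ} (hJ : Jᴴ = J) (hJ2 : J * J = J) : J.PosSemidef := by
  have h : J = Jᴴ * J := by rw [hJ, hJ2]
  rw [h]
  exact Matrix.posSemidef_conjTranspose_mul_self J

lemma trace_contract {X K : Matrix m m ℂ} (hX : X.PosSemidef)
    (hK1 : (1 - K).PosSemidef) : ((X * K).trace).re ≤ (X.trace).re := by
  have h := trace_psd_mul_nonneg hX hK1
  rw [Matrix.mul_sub, Matrix.mul_one, Matrix.trace_sub] at h
  have := re_nn h
  simp only [Complex.sub_re] at this
  linarith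

/-- Cauchy-Schwarz for the Frobenius inner product -/
lemma trace_cs (X Y : Matrix m m ℂ) :
    ‖(Xᴴ * Y).trace‖ ≤ Real.sqrt ((Xᴴ * X).trace.re) * Real.sqrt ((Yᴴ * Y).trace.re) := by
  let x : EuclideanSpace ℂ (m × m) := WithLp.toLp 2 (fun p : m × m => X p.1 p.2)
  let y : EuclideanSpace ℂ (m × m) := WithLp.toLp 2 (fun p : m × m => Y p.1 p.2)
  have key : ∀ Z W : Matrix m m ℂ, (Zᴴ * W).trace
      = ∑ p : m × m, (starRingEnd ℂ) (Z p.1 p.2) * W p.1 p.2 := by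
    intro Z W
    rw [Fintype.sum_prod_type, Matrix.trace]
    rw [Finset.sum_comm]
    refine Finset.sum_congr rfl fun i _ => ?_
    rw [Matrix.diag, Matrix.mul_apply]
    exact Finset.sum_congr rfl fun j _ => by rw [Matrix.conjTranspose_apply, RCLike.star_def]
  have h1 : (Xᴴ * Y).trace = inner (𝕜 := ℂ) x y := by
    rw [key, PiLp.inner_apply]
    exact Finset.sum_congr rfl fun p _ => by simp [x, y, mul_comm]
  have h2 : ∀ (Z : Matrix m m ℂ) (z : EuclideanSpace ℂ (m × m)),
      (∀ p : m × m, z p = Z p.1 p.2) → Real.sqrt ((Zᴴ * Z).trace.re) = ‖z‖ := by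
    intro Z z hz
    rw [EuclideanSpace.norm_eq, key]
    congr 1
    rw [Complex.re_sum]
    refine Finset.sum_congr rfl fun p _ => ?_
    rw [hz p, mul_comm, Complex.mul_conj]
    norm_cast
    simp [Complex.normSq_eq_norm_sq]
  rw [h1, h2 X x fun p => rfl, h2 Y y fun p => rfl]
  exact norm_inner_le_norm x y

lemma eigU_star_mul {A : Matrix m m ℂ} (hA : A.IsHermitian) :
    ((hA.eigenvectorUnitary : Matrix m m ℂ))ᴴ * (hA.eigenvectorUnitary : Matrix m m ℂ) = 1 := by
  rw [← Matrix.star_eq_conjTranspose]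
  exact Unitary.coe_star_mul_self hA.eigenvectorUnitary

lemma herm_eq_cg {A : Matrix m m ℂ} (hA : A.IsHermitian) :
    A = cg (hA.eigenvectorUnitary : Matrix m m ℂ) hA.eigenvalues := by
  unfold cg
  rw [← Matrix.star_eq_conjTranspose]
  exact hA.spectral_theorem

lemma sqrt_eq_cg {A : Matrix m m ℂ} (hA : A.PosSemidef) :
    hA.sqrt = cg (hA.1.eigenvectorUnitary : Matrix m m ℂ)
      (fun i => Real.sqrt (hA.1.eigenvalues i)) := by
  unfold cg
  rw [← Matrix.star_eq_conjTranspose]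
  rfl

set_option maxHeartbeats 1000000 in
lemma final_real {p q F : ℝ} (hp0 : 0 ≤ p) (hp1 : p ≤ 1) (hq0 : 0 ≤ q) (hq1 : q ≤ 1)
    (hqp : q ≤ p) (hF0 : 0 ≤ F)
    (hFB : F ≤ Real.sqrt q * Real.sqrt p + Real.sqrt (1 - q) * Real.sqrt (1 - p)) :
    p - q ≤ Real.sqrt (1 - F ^ 2) := by
  set a := Real.sqrt p with ha
  set b := Real.sqrt q with hb
  set c := Real.sqrt (1 - p) with hc
  set d := Real.sqrt (1 - q) with hd
  have ha0 : 0 ≤ a := Real.sqrt_nonneg _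
  have hb0 : 0 ≤ b := Real.sqrt_nonneg _
  have hc0 : 0 ≤ c := Real.sqrt_nonneg _
  have hd0 : 0 ≤ d := Real.sqrt_nonneg _
  have ha2 : a ^ 2 = p := Real.sq_sqrt hp0
  have hb2 : b ^ 2 = q := Real.sq_sqrt hq0
  have hc2 : c ^ 2 = 1 - p := Real.sq_sqrt (by linarith)
  have hd2 : d ^ 2 = 1 - q := Real.sq_sqrt (by linarith)
  have hF2 : F ^ 2 ≤ (b * a + d * c) ^ 2 := by
    have hBnn : 0 ≤ b * a + d * c := by positivity
    nlinarith
  have hid : (b * a + d * c) ^ 2 + (a * d - b * c) ^ 2 = 1 := by nlinarith [ha2, hb2, hc2, hd2]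
  have hxy : (a * d - b * c) ^ 2 ≤ 1 - F ^ 2 := by nlinarith
  have h1 : (a * d) ^ 2 = p * (1 - q) := by rw [mul_pow, ha2, hd2]
  have h2 : (b * c) ^ 2 = q * (1 - p) := by rw [mul_pow, hb2, hc2]
  have hadbc : b * c ≤ a * d := by
    refine le_of_pow_le_pow_left₀ two_ne_zero (by positivity) ?_
    nlinarith
  have hsum1 : a * d + b * c ≤ 1 := by nlinarith [sq_nonneg (a * b - c * d)]
  have hpq : p - q = (a * d - b * c) * (a * d + b * c) := by
    have h3 : (a * d - b * c) * (a * d + b * c) = (a * d) ^ 2 - (b * c) ^ 2 := by ring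
    rw [h3, h1, h2]; ring
  calc p - q ≤ a * d - b * c := by
        nlinarith [mul_nonneg (sub_nonneg.2 hadbc) (sub_nonneg.2 hsum1)]
    _ ≤ Real.sqrt (1 - F ^ 2) := by
        rw [← Real.sqrt_sq (by linarith : 0 ≤ a * d - b * c)]
        exact Real.sqrt_le_sqrt hxy

/-- The per-projection Cauchy–Schwarz bound. -/
lemma proj_bound (S R U Pg : Matrix m m ℂ) (hS : Sᴴ = S) (hR : Rᴴ = R)
    (hPh : Pgᴴ = Pg) (hPP : Pg * Pg = Pg) (hPpsd : Pg.PosSemidef)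
    (h1K : (1 - U * Uᴴ).PosSemidef) :
    ‖(Uᴴ * (S * (Pg * R))).trace‖ ≤
      Real.sqrt ((Pg * (S * S)).trace.re) * Real.sqrt ((Pg * (R * R)).trace.re) := by
  have key := trace_cs (Pg * S * U) (Pg * R)
  have e1 : (Pg * S * U)ᴴ * (Pg * R) = Uᴴ * (S * (Pg * R)) := by
    simp only [Matrix.conjTranspose_mul, hS, hPh, Matrix.mul_assoc]
    rw [← Matrix.mul_assoc Pg Pg R, hPP]
  have hG : (S * Pg * S).PosSemidef := by
    have := hPpsd.mul_mul_conjTranspose_same S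
    rwa [hS] at this
  have e2 : ((Pg * S * U)ᴴ * (Pg * S * U)).trace.re ≤ (Pg * (S * S)).trace.re := by
    have eX : (Pg * S * U)ᴴ * (Pg * S * U) = Uᴴ * ((S * Pg * S) * U) := by
      simp only [Matrix.conjTranspose_mul, hS, hPh, Matrix.mul_assoc]
      rw [← Matrix.mul_assoc Pg Pg, hPP]
    have etr : ((Pg * S * U)ᴴ * (Pg * S * U)).trace = ((S * Pg * S) * (U * Uᴴ)).trace := by
      rw [eX, Matrix.trace_mul_comm, Matrix.mul_assoc]
    have etr2 : (S * Pg * S).trace = (Pg * (S * S)).trace := by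
      rw [Matrix.trace_mul_cycle, ← Matrix.mul_assoc, Matrix.trace_mul_comm, Matrix.mul_assoc]
    rw [etr, ← etr2]
    exact trace_contract hG h1K
  have e3 : ((Pg * R)ᴴ * (Pg * R)).trace = (Pg * (R * R)).trace := by
    have : (Pg * R)ᴴ * (Pg * R) = R * (Pg * R) := by
      simp only [Matrix.conjTranspose_mul, hR, hPh, Matrix.mul_assoc]
      rw [← Matrix.mul_assoc Pg Pg R, hPP]
    rw [this, Matrix.trace_mul_comm, Matrix.mul_assoc]
  rw [e1] at key
  refine key.trans (mul_le_mul (Real.sqrt_le_sqrt e2) (by rw [e3]) (Real.sqrt_nonneg _)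
    (Real.sqrt_nonneg _))

end FvdGAux
set_option maxHeartbeats 4000000 in
/-- Fuchs–van de Graaf inequality: D(ρ,σ) ≤ √(1 − F(ρ,σ)²). -/
theorem fuchs_van_de_graaf {n : ℕ} (ρ σ : Matrix (Fin n) (Fin n) ℂ)
    (hρ : ρ.PosSemidef) (hρtr : ρ.trace = 1)
    (hσ : σ.PosSemidef) (hσtr : σ.trace = 1) :
    traceDist ρ σ ≤ Real.sqrt (1 - fidelity ρ σ ^ 2) := by
  have hΔ : (ρ - σ).IsHermitian := hρ.1.sub hσ.1
  set V : Matrix (Fin n) (Fin n) ℂ := (hΔ.eigenvectorUnitary : Matrix (Fin n) (Fin n) ℂ)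
    with hVdef
  have hV : Vᴴ * V = 1 := eigU_star_mul hΔ
  have hV' : V * Vᴴ = 1 := mul_eq_one_comm.mp hV
  set lam : Fin n → ℝ := hΔ.eigenvalues with hlamdef
  have hspec : ρ - σ = cg V lam := herm_eq_cg hΔ
  set χ : Fin n → ℝ := fun i => if 0 ≤ lam i then 1 else 0 with hχdef
  have hχ01 : ∀ i, 0 ≤ χ i := fun i => by rw [hχdef]; dsimp only; split <;> norm_num
  set P : Matrix (Fin n) (Fin n) ℂ := cg V χ with hPdef
  have hPP : P * P = P := by
    rw [hPdef, cg_mul hV]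
    have hfun : (fun i => χ i * χ i) = χ := by
      funext i
      by_cases h : 0 ≤ lam i <;> simp [hχdef, h]
    rw [hfun]
  have hPh : Pᴴ = P := cg_conjTranspose χ
  have hPpsd : P.PosSemidef := cg_psd χ hχ01
  set P' : Matrix (Fin n) (Fin n) ℂ := cg V (fun i => 1 - χ i) with hP'def
  have hcgsub := cg_sub (V := V) (fun _ => 1) χ
  have hP'eq : (1 : Matrix (Fin n) (Fin n) ℂ) - P = P' := by
    rw [hP'def, ← hcgsub, cg_one hV']
  have hP'P' : P' * P' = P' := by
    rw [hP'def, cg_mul hV]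
    have hfun : (fun i => (1 - χ i) * (1 - χ i)) = fun i => 1 - χ i := by
      funext i
      by_cases h : 0 ≤ lam i <;> simp [hχdef, h]
    rw [hfun]
  have hP'h : P'ᴴ = P' := cg_conjTranspose _
  have hP'psd : P'.PosSemidef := cg_psd _ fun i => by
    rw [hχdef]; dsimp only; split <;> norm_num
  -- trace distance as sum of eigenvalues
  have habs : psdSqrt ((ρ - σ)ᴴ * (ρ - σ)) = cg V (fun i => |lam i|) := by
    refine psdSqrt_eq_of (cg_psd _ fun i => abs_nonneg _) ?_
    rw [cg_mul hV, hΔ.eq, hspec, cg_mul hV]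
    have hfun : (fun i => |lam i| * |lam i|) = fun i => lam i * lam i := by
      funext i; exact abs_mul_abs_self _
    rw [hfun]
  have htd : traceDist ρ σ = (∑ i, |lam i|) / 2 := by
    unfold traceDist
    rw [habs, trace_cg hV, Complex.re_sum]
    simp
  have hsum0 : ∑ i, lam i = 0 := by
    have h1 : (ρ - σ).trace = 0 := by rw [Matrix.trace_sub, hρtr, hσtr, sub_self]
    rw [hspec, trace_cg hV] at h1
    exact_mod_cast h1
  set t := ∑ i, χ i * lam i with htdef
  have habs_sum : ∑ i, |lam i| = 2 * t - ∑ i, lam i := by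
    rw [htdef, Finset.mul_sum, ← Finset.sum_sub_distrib]
    refine Finset.sum_congr rfl fun i _ => ?_
    by_cases h : 0 ≤ lam i
    · have hx : χ i = 1 := by simp [hχdef, h]
      rw [abs_of_nonneg h, hx]; ring
    · have hx : χ i = 0 := by simp [hχdef, h]
      rw [abs_of_neg (lt_of_not_ge h), hx]; ring
  have htd2 : traceDist ρ σ = t := by rw [htd, habs_sum, hsum0]; ring
  have ht0 : 0 ≤ t := by
    rw [htdef]
    refine Finset.sum_nonneg fun i _ => ?_
    by_cases h : 0 ≤ lam i
    · have hx : χ i = 1 := by simp [hχdef, h]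
      rw [hx]; simpa using h
    · have hx : χ i = 0 := by simp [hχdef, h]
      rw [hx]; simp
  set p := ((P * ρ).trace).re with hpdef
  set q := ((P * σ).trace).re with hqdef
  have hpq_t : p - q = t := by
    have h1 : P * (ρ - σ) = P * ρ - P * σ := Matrix.mul_sub P ρ σ
    have h2 : (P * (ρ - σ)).trace = ∑ i, ((χ i * lam i : ℝ) : ℂ) := by
      rw [hspec, hPdef, cg_mul hV, trace_cg hV]
    calc p - q = (P * (ρ - σ)).trace.re := by
          rw [h1, Matrix.trace_sub, Complex.sub_re]
      _ = t := by rw [h2, Complex.re_sum, htdef]; simp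
  have hp0 : 0 ≤ p := re_nn (trace_psd_mul_nonneg hPpsd hρ)
  have hq0 : 0 ≤ q := re_nn (trace_psd_mul_nonneg hPpsd hσ)
  have eρ : (P' * ρ).trace.re = 1 - p := by
    rw [← hP'eq, Matrix.sub_mul, Matrix.one_mul, Matrix.trace_sub, Complex.sub_re, hρtr]
    simp [hpdef]
  have eσ : (P' * σ).trace.re = 1 - q := by
    rw [← hP'eq, Matrix.sub_mul, Matrix.one_mul, Matrix.trace_sub, Complex.sub_re, hσtr]
    simp [hqdef]
  have hp1 : p ≤ 1 := by
    have h := re_nn (trace_psd_mul_nonneg hP'psd hρ)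
    rw [eρ] at h; linarith
  have hq1 : q ≤ 1 := by
    have h := re_nn (trace_psd_mul_nonneg hP'psd hσ)
    rw [eσ] at h; linarith
  have hqp : q ≤ p := by linarith [hpq_t, ht0]
  -- fidelity side
  set R : Matrix (Fin n) (Fin n) ℂ := hρ.sqrt with hRdef
  set S : Matrix (Fin n) (Fin n) ℂ := hσ.sqrt with hSdef
  have hRh : Rᴴ = R := hρ.posSemidef_sqrt.1
  have hSh : Sᴴ = S := hσ.posSemidef_sqrt.1
  have hRR : R * R = ρ := hρ.sqrt_mul_self
  have hSS : S * S = σ := hσ.sqrt_mul_self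
  set T : Matrix (Fin n) (Fin n) ℂ := S * R with hTdef
  have hMps : (Tᴴ * T).PosSemidef := Matrix.posSemidef_conjTranspose_mul_self T
  have hTT : Tᴴ * T = R * σ * R := by
    rw [hTdef, Matrix.conjTranspose_mul, hRh, hSh, Matrix.mul_assoc R S (S * R),
      ← Matrix.mul_assoc S S R, hSS, ← Matrix.mul_assoc]
  have hfid : fidelity ρ σ = ((psdSqrt (Tᴴ * T)).trace).re := by
    unfold fidelity
    rw [psdSqrt_of ρ hρ, ← hRdef, ← hTT]
  set W : Matrix (Fin n) (Fin n) ℂ := (hMps.1.eigenvectorUnitary : Matrix (Fin n) (Fin n) ℂ)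
    with hWdef
  have hW : Wᴴ * W = 1 := eigU_star_mul hMps.1
  set d : Fin n → ℝ := hMps.1.eigenvalues with hddef
  have hd0 : ∀ i, 0 ≤ d i := fun i => hMps.eigenvalues_nonneg i
  have hMspec : Tᴴ * T = cg W d := herm_eq_cg hMps.1
  have hsqM : psdSqrt (Tᴴ * T) = cg W (fun i => Real.sqrt (d i)) := by
    rw [psdSqrt_of _ hMps, sqrt_eq_cg]
  set g : Fin n → ℝ := fun i => if d i = 0 then 0 else (Real.sqrt (d i))⁻¹ with hgdef
  set U : Matrix (Fin n) (Fin n) ℂ := T * cg W g with hUdef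
  have hcgh : (cg W g)ᴴ = cg W g := cg_conjTranspose g
  have hgd : ∀ i, g i * d i = Real.sqrt (d i) := fun i => by
    by_cases h : d i = 0
    · simp [hgdef, h]
    · rw [hgdef]; dsimp only; rw [if_neg h, ← div_eq_inv_mul, Real.div_sqrt]
  have hUT : Uᴴ * T = psdSqrt (Tᴴ * T) := by
    rw [hsqM, hUdef, Matrix.conjTranspose_mul, hcgh, Matrix.mul_assoc, hMspec, cg_mul hW]
    rw [show (fun i => g i * d i) = fun i => Real.sqrt (d i) from funext hgd]
  set E : Matrix (Fin n) (Fin n) ℂ := cg W (fun i => if d i = 0 then (0 : ℝ) else 1) with hEdef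
  have hUU : Uᴴ * U = E := by
    rw [hEdef, hUdef, Matrix.conjTranspose_mul, hcgh,
      Matrix.mul_assoc (cg W g) Tᴴ (T * cg W g), ← Matrix.mul_assoc Tᴴ T (cg W g), hMspec,
      cg_mul hW, cg_mul hW]
    have hfun : (fun i => g i * (d i * g i)) = fun i => if d i = 0 then (0 : ℝ) else 1 := by
      funext i
      by_cases h : d i = 0
      · simp [hgdef, h]
      · have hpos : 0 < d i := lt_of_le_of_ne (hd0 i) (Ne.symm h)
        have hs : Real.sqrt (d i) ≠ 0 := ne_of_gt (Real.sqrt_pos.mpr hpos)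
        rw [hgdef]; dsimp only; rw [if_neg h, if_neg h]
        field_simp
        rw [Real.sq_sqrt hpos.le]
    rw [hfun]
  have hUE : U * E = U := by
    rw [hEdef, hUdef, Matrix.mul_assoc, cg_mul hW]
    have hge : (fun i => g i * if d i = 0 then (0 : ℝ) else 1) = g := by
      funext i
      by_cases h : d i = 0 <;> simp [hgdef, h]
    rw [hge]
  have hKK : (U * Uᴴ) * (U * Uᴴ) = U * Uᴴ := by
    rw [Matrix.mul_assoc, ← Matrix.mul_assoc Uᴴ U Uᴴ, hUU, ← Matrix.mul_assoc U E Uᴴ, hUE]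
  have h1K : (1 - U * Uᴴ).PosSemidef := by
    refine herm_idem_psd ?_ ?_
    · rw [Matrix.conjTranspose_sub, Matrix.conjTranspose_mul,
        Matrix.conjTranspose_conjTranspose, Matrix.conjTranspose_one]
    · rw [Matrix.sub_mul, Matrix.one_mul, Matrix.mul_sub, Matrix.mul_one, hKK]
      abel
  set F := fidelity ρ σ with hFdef
  have hFtr : F = ((Uᴴ * T).trace).re := by rw [hfid, ← hUT]
  have hF0 : 0 ≤ F := by
    rw [hfid, psdSqrt_of _ hMps]
    exact re_nn (trace_psd_nonneg hMps.posSemidef_sqrt)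
  have hPsum : P + P' = 1 := by rw [← hP'eq]; abel
  have hsplit : Uᴴ * T = Uᴴ * (S * (P * R)) + Uᴴ * (S * (P' * R)) := by
    rw [← Matrix.mul_add, ← Matrix.mul_add, ← Matrix.add_mul, hPsum, Matrix.one_mul, hTdef]
  have hb1 := proj_bound S R U P hSh hRh hPh hPP hPpsd h1K
  have hb2 := proj_bound S R U P' hSh hRh hP'h hP'P' hP'psd h1K
  rw [hSS, hRR] at hb1 hb2
  rw [eσ, eρ] at hb2
  have hFB : F ≤ Real.sqrt q * Real.sqrt p + Real.sqrt (1 - q) * Real.sqrt (1 - p) := by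
    calc F ≤ ‖(Uᴴ * T).trace‖ := by
          rw [hFtr]; exact Complex.re_le_norm _
      _ ≤ ‖(Uᴴ * (S * (P * R))).trace‖ + ‖(Uᴴ * (S * (P' * R))).trace‖ := by
          rw [hsplit, Matrix.trace_add]; exact norm_add_le _ _
      _ ≤ Real.sqrt q * Real.sqrt p + Real.sqrt (1 - q) * Real.sqrt (1 - p) :=
          add_le_add hb1 hb2
  have main := final_real hp0 hp1 hq0 hq1 hqp hF0 hFB
  rw [htd2, ← hpq_t]
  exact main
end

section
/- There exist Hermitian 3×3 matrices A₁, A₂, A₃, B₁, B₂, B₃ such that every two of the pairs (A_i, B_i) are simultaneously unitarily equivalent (for each pair of indices i ≠ j there is a unitary U with U A_i U† = B_i and U A_j U† = B_j), but there is no single unitary U with U A_i U† = B_i for all three i simultaneously. Specifically, one may take A₁ = diag(0,0,1), A₂ the matrix with 1 in entries (1,3) and (3,1) and zeros elsewhere, A₃ = i√3·(the antisymmetric matrix with (1,2),(2,3),(3,1) entries +1 and (2,1),(3,2),(1,3) entries −1), B₁ = A₁, B₂ = A₂, B₃ = V A₃ V† with V the permutation matrix swapping basis vectors 1 and 2; then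 |Tr[B₁B₂B₃] − Tr[A₁A₂A₃]| = 2√3 ≠ 0, which obstructs joint unitary equivalence. -/
open Matrix ComplexOrder
open scoped Classical

noncomputable def A1 : Matrix (Fin 3) (Fin 3) ℂ := !![0, 0, 0; 0, 0, 0; 0, 0, 1]

noncomputable def A2 : Matrix (Fin 3) (Fin 3) ℂ := !![0, 0, 1; 0, 0, 0; 1, 0, 0]

noncomputable def A3 : Matrix (Fin 3) (Fin 3) ℂ :=
  (Complex.I * (Real.sqrt 3 : ℂ)) • !![0, 1, -1; -1, 0, 1; 1, -1, 0]

/-- The permutation unitary swapping the first two basis vectors. -/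
noncomputable def Vswap : Matrix (Fin 3) (Fin 3) ℂ := !![0, 1, 0; 1, 0, 0; 0, 0, 1]

noncomputable def Amats : Fin 3 → Matrix (Fin 3) (Fin 3) ℂ := ![A1, A2, A3]

noncomputable def Bmats : Fin 3 → Matrix (Fin 3) (Fin 3) ℂ :=
  ![A1, A2, Vswap * A3 * star Vswap]

-- auxiliary unitaries
noncomputable def U02 : Matrix (Fin 3) (Fin 3) ℂ := !![0, -1, 0; -1, 0, 0; 0, 0, -1]
noncomputable def P13 : Matrix (Fin 3) (Fin 3) ℂ := !![0, 0, 1; 0, 1, 0; 1, 0, 0]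
noncomputable def Mraw : Matrix (Fin 3) (Fin 3) ℂ := !![0, 1, -1; -1, 0, 1; 1, -1, 0]

lemma star_Vswap : star Vswap = Vswap := by
  rw [Matrix.star_eq_conjTranspose]
  ext i j; fin_cases i <;> fin_cases j <;> simp [Matrix.vecHead, Matrix.vecTail, Function.comp, Vswap]

lemma star_U02 : star U02 = U02 := by
  rw [Matrix.star_eq_conjTranspose]
  ext i j; fin_cases i <;> fin_cases j <;> simp [Matrix.vecHead, Matrix.vecTail, Function.comp, U02]

lemma star_P13 : star P13 = P13 := by
  rw [Matrix.star_eq_conjTranspose]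
  ext i j; fin_cases i <;> fin_cases j <;> simp [Matrix.vecHead, Matrix.vecTail, Function.comp, P13]

lemma Bmats2_eq : Bmats 2 = -A3 := by
  show Vswap * A3 * star Vswap = -A3
  rw [star_Vswap, A3, Matrix.mul_smul, Matrix.smul_mul, ← smul_neg]
  congr 1
  ext i j; fin_cases i <;> fin_cases j <;>
    simp [Matrix.vecHead, Matrix.vecTail, Function.comp, Vswap, Matrix.mul_apply, Fin.sum_univ_three]

lemma mem_U02 : U02 ∈ Matrix.unitaryGroup (Fin 3) ℂ := by
  constructor <;>
  · rw [star_U02]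
    ext i j; fin_cases i <;> fin_cases j <;>
      simp [Matrix.vecHead, Matrix.vecTail, Function.comp, U02, Matrix.mul_apply, Fin.sum_univ_three, Matrix.one_apply]

lemma mem_P13 : P13 ∈ Matrix.unitaryGroup (Fin 3) ℂ := by
  constructor <;>
  · rw [star_P13]
    ext i j; fin_cases i <;> fin_cases j <;>
      simp [Matrix.vecHead, Matrix.vecTail, Function.comp, P13, Matrix.mul_apply, Fin.sum_univ_three, Matrix.one_apply]

lemma U02_A1 : U02 * A1 * star U02 = A1 := by
  rw [star_U02]
  ext i j; fin_cases i <;> fin_cases j <;>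
    simp [Matrix.vecHead, Matrix.vecTail, Function.comp, U02, A1, Matrix.mul_apply, Fin.sum_univ_three]

lemma U02_A3 : U02 * A3 * star U02 = -A3 := by
  rw [star_U02, A3, Matrix.mul_smul, Matrix.smul_mul, ← smul_neg]
  congr 1
  ext i j; fin_cases i <;> fin_cases j <;>
    simp [Matrix.vecHead, Matrix.vecTail, Function.comp, U02, Matrix.mul_apply, Fin.sum_univ_three]

lemma P13_A2 : P13 * A2 * star P13 = A2 := by
  rw [star_P13]
  ext i j; fin_cases i <;> fin_cases j <;>
    simp [Matrix.vecHead, Matrix.vecTail, Function.comp, P13, A2, Matrix.mul_apply, Fin.sum_univ_three]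

lemma P13_A3 : P13 * A3 * star P13 = -A3 := by
  rw [star_P13, A3, Matrix.mul_smul, Matrix.smul_mul, ← smul_neg]
  congr 1
  ext i j; fin_cases i <;> fin_cases j <;>
    simp [Matrix.vecHead, Matrix.vecTail, Function.comp, P13, Matrix.mul_apply, Fin.sum_univ_three]

lemma herm_A1 : A1.IsHermitian := by
  rw [Matrix.IsHermitian]
  ext i j; fin_cases i <;> fin_cases j <;> simp [Matrix.vecHead, Matrix.vecTail, Function.comp, A1]

lemma herm_A2 : A2.IsHermitian := by
  rw [Matrix.IsHermitian]
  ext i j; fin_cases i <;> fin_cases j <;> simp [Matrix.vecHead, Matrix.vecTail, Function.comp, A2]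

lemma herm_A3 : A3.IsHermitian := by
  rw [Matrix.IsHermitian]
  ext i j; fin_cases i <;> fin_cases j<;>
    simp [Matrix.vecHead, Matrix.vecTail, A3, Complex.ext_iff]

lemma trace_AAA : (A1 * A2 * A3).trace = -(Complex.I * (Real.sqrt 3 : ℂ)) := by
  rw [Matrix.trace_fin_three]
  simp [Matrix.vecHead, Matrix.vecTail, A1, A2, A3, Matrix.mul_apply, Fin.sum_univ_three]

/-- Three pairs of Hermitian 3×3 matrices such that every two pairs are simultaneously
unitarily equivalent, but not all three at once; the obstruction is the invariant
Tr[B₁B₂B₃] ≠ Tr[A₁A₂A₃], with difference of absolute value 2√3. -/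
theorem pairwise_but_not_jointly_unitarily_equivalent :
    (∀ i, (Amats i).IsHermitian) ∧ (∀ i, (Bmats i).IsHermitian) ∧
    (∀ i j : Fin 3, i ≠ j →
      ∃ U ∈ Matrix.unitaryGroup (Fin 3) ℂ,
        U * Amats i * star U = Bmats i ∧ U * Amats j * star U = Bmats j) ∧
    (¬ ∃ U ∈ Matrix.unitaryGroup (Fin 3) ℂ,
        ∀ i, U * Amats i * star U = Bmats i) ∧
    ‖(Bmats 0 * Bmats 1 * Bmats 2).trace - (Amats 0 * Amats 1 * Amats 2).trace‖ =
      2 * Real.sqrt 3 := by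
  have hA : ∀ i, (Amats i).IsHermitian := by
    intro i; fin_cases i
    · exact herm_A1
    · exact herm_A2
    · exact herm_A3
  have hB0 : Bmats 0 = A1 := rfl
  have hB1 : Bmats 1 = A2 := rfl
  have hA0 : Amats 0 = A1 := rfl
  have hA1 : Amats 1 = A2 := rfl
  have hA2 : Amats 2 = A3 := rfl
  have htr : (Bmats 0 * Bmats 1 * Bmats 2).trace - (Amats 0 * Amats 1 * Amats 2).trace
      = 2 * (Complex.I * (Real.sqrt 3 : ℂ)) := by
    rw [hB0, hB1, Bmats2_eq, hA0, hA1, hA2, Matrix.mul_neg, Matrix.trace_neg, trace_AAA]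
    ring
  refine ⟨hA, ?_, ?_, ?_, ?_⟩
  · intro i; fin_cases i
    · exact herm_A1
    · exact herm_A2
    · show (Vswap * A3 * star Vswap).IsHermitian
      rw [show Vswap * A3 * star Vswap = Bmats 2 from rfl, Bmats2_eq]
      exact herm_A3.neg
  · intro i j hij
    fin_cases i <;> fin_cases j <;> simp_all
    · exact ⟨1, Submonoid.one_mem _, by simp, by simp⟩
    · exact ⟨U02, mem_U02, U02_A1, by rw [Bmats2_eq]; exact U02_A3⟩
    · exact ⟨1, Submonoid.one_mem _, by simp, by simp⟩
    · exact ⟨P13, mem_P13, P13_A2, by rw [Bmats2_eq]; exact P13_A3⟩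
    · exact ⟨U02, mem_U02, by rw [Bmats2_eq]; exact U02_A3, U02_A1⟩
    · exact ⟨P13, mem_P13, by rw [Bmats2_eq]; exact P13_A3, P13_A2⟩
  · rintro ⟨U, hU, hUeq⟩
    have hUs : star U * U = 1 := hU.1
    have key : (Bmats 0 * Bmats 1 * Bmats 2).trace = (Amats 0 * Amats 1 * Amats 2).trace := by
      rw [← hUeq 0, ← hUeq 1, ← hUeq 2]
      have : (U * Amats 0 * star U) * (U * Amats 1 * star U) * (U * Amats 2 * star U)
          = U * (Amats 0 * Amats 1 * Amats 2) * star U := by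
        have hcanc : ∀ X : Matrix (Fin 3) (Fin 3) ℂ, star U * (U * X) = X := fun X => by
          rw [← Matrix.mul_assoc, hUs, Matrix.one_mul]
        simp only [Matrix.mul_assoc, hcanc]
      rw [this, Matrix.trace_mul_cycle, ← Matrix.mul_assoc, hUs, Matrix.one_mul]
    rw [key] at htr
    simp at htr
  · rw [htr]
    rw [norm_mul, norm_mul, Complex.norm_I, Complex.norm_real, Real.norm_eq_abs, Complex.norm_two]
    rw [abs_of_nonneg (Real.sqrt_nonneg 3)]
    ring
end
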